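/- The Lobachevsky function Λ(θ) = −∫₀^θ log|2 sin t| dt is continuous on the real line. -/

import Mathlib

open Real MeasureTheory

/-- The Lobachevsky function `Λ(θ) = −∫₀^θ log |2 sin t| dt`. -/
noncomputable def lob (θ : ℝ) : ℝ := - ∫ t in (0:ℝ)..θ, Real.log |2 * Real.sin t|

theorem intervalIntegrable_log_abs_two_mul_sin (a b : ℝ) :
    IntervalIntegrable (fun t => Real.log |2 * Real.sin t|) volume a b := by
  simp only [Real.log_abs]
  exact (analyticOnNhd_const.mul analyticOnNhd_sin).meromorphicOn.intervalIntegrable_log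

/-- The Lobachevsky function is continuous on the real line. -/
theorem lob_continuous : Continuous lob :=
  (intervalIntegral.continuous_primitive intervalIntegrable_log_abs_two_mul_sin 0).neg
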